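/- Solutions of the Hamiltonian system are unique even though its right-hand side is only continuous: if g : ℝ² → ℝ is continuously differentiable, x₀ ∈ ℝ² is such that ∇g(x) ≠ 0 for every x with g(x) = g(x₀), and z, ẑ : [0, a] → ℝ² are two differentiable functions satisfying z₁'(t) = -∂₂g(z₁(t), z₂(t)), z₂'(t) = ∂₁g(z₁(t), z₂(t)) (and the same equations for ẑ) on [0, a] with z(0) = ẑ(0) = x₀, then z(t) = ẑ(t) for all t ∈ [0, a]. -/

import Mathlib

/-!
Energy is conserved, so both solutions run along the level set `{g = g x₀}`, on which `∇g ≠ 0`.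
Near a point `p` of it, the coordinate `π` along the Hamiltonian field `X p` is transversal to the
level set, so by the inverse function theorem for `(g, π)` a point of the level set near `p` is
determined by its `π`-coordinate. Hence `π ∘ z` solves a scalar autonomous equation `u' = F u`
with `F` continuous and `F (π p) = |X p|² ≠ 0`, whose solutions are unique because
`∫ du / F u` grows at unit rate along each of them. Continuous induction on the set of times
where the two solutions agree finishes the proof.
-/

/-- The first partial derivative of `f : ℝ × ℝ → ℝ`. -/
noncomputable def pd1 (f : ℝ × ℝ → ℝ) (x : ℝ × ℝ) : ℝ := fderiv ℝ f x (1, 0)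

/-- The second partial derivative of `f : ℝ × ℝ → ℝ`. -/
noncomputable def pd2 (f : ℝ × ℝ → ℝ) (x : ℝ × ℝ) : ℝ := fderiv ℝ f x (0, 1)

open Set Filter Topology Function

theorem Set.OrdConnected.injOn_of_hasDerivAt_ne_zero {f f' : ℝ → ℝ} {s : Set ℝ}
    (hs : s.OrdConnected) (hf : ∀ x ∈ s, HasDerivAt f (f' x) x) (hf' : ∀ x ∈ s, f' x ≠ 0) :
    InjOn f s := by
  intro x hx y hy hfxy
  by_contra hne
  wlog hxy : x < y generalizing x y
  · exact this hy hx hfxy.symm (Ne.symm hne) (lt_of_le_of_ne (not_lt.1 hxy) (Ne.symm hne))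
  have hsub : Icc x y ⊆ s := hs.out hx hy
  obtain ⟨c, hc, hc0⟩ := exists_hasDerivAt_eq_zero hxy
    (fun t ht => (hf t (hsub ht)).continuousAt.continuousWithinAt) hfxy
    (fun t ht => hf t (hsub (Ioo_subset_Icc_self ht)))
  exact hf' c (hsub (Ioo_subset_Icc_self hc)) hc0

theorem IsOpen.hasDerivAt_intervalIntegral {E : Type*} [NormedAddCommGroup E] [NormedSpace ℝ E]
    [CompleteSpace E] {f : ℝ → E} {s : Set ℝ} (hs : IsOpen s) (hs' : s.OrdConnected)
    (hf : ContinuousOn f s) {a b : ℝ} (ha : a ∈ s) (hb : b ∈ s) :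
    HasDerivAt (fun u => ∫ x in a..u, f x) (f b) b :=
  intervalIntegral.integral_hasDerivAt_right
    ((hf.mono (hs'.uIcc_subset ha hb)).intervalIntegrable)
    (hf.stronglyMeasurableAtFilter hs b hb) (hf.continuousAt (hs.mem_nhds hb))

theorem ODE_solution_unique_of_ne_zero {F u v : ℝ → ℝ} {s : Set ℝ} {t₀ b : ℝ} (hs : IsOpen s)
    (hs' : s.OrdConnected) (hF : ContinuousOn F s) (hF₀ : ∀ w ∈ s, F w ≠ 0)
    (hus : MapsTo u (Icc t₀ b) s) (hvs : MapsTo v (Icc t₀ b) s)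
    (hu : ∀ t ∈ Icc t₀ b, HasDerivWithinAt u (F (u t)) (Icc t₀ b) t)
    (hv : ∀ t ∈ Icc t₀ b, HasDerivWithinAt v (F (v t)) (Icc t₀ b) t)
    (h₀ : u t₀ = v t₀) : EqOn u v (Icc t₀ b) := by
  intro t ht
  have hc : u t₀ ∈ s := hus (left_mem_Icc.2 (ht.1.trans ht.2))
  set G : ℝ → ℝ := fun w => ∫ x in u t₀..w, (F x)⁻¹
  have hG : ∀ w ∈ s, HasDerivAt G (F w)⁻¹ w := fun w hw =>
    hs.hasDerivAt_intervalIntegral hs' (hF.inv₀ hF₀) hc hw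
  have hGy : ∀ y : ℝ → ℝ, MapsTo y (Icc t₀ b) s →
      (∀ t ∈ Icc t₀ b, HasDerivWithinAt y (F (y t)) (Icc t₀ b) t) →
      ∀ t ∈ Icc t₀ b, HasDerivWithinAt (G ∘ y) 1 (Icc t₀ b) t := by
    intro y hys hy t ht
    have := (hG _ (hys ht)).comp_hasDerivWithinAt t (hy t ht)
    rwa [inv_mul_cancel₀ (hF₀ _ (hys ht))] at this
  have hGu := hGy u hus hu
  have hGv := hGy v hvs hv
  refine hs'.injOn_of_hasDerivAt_ne_zero hG (fun w hw => inv_ne_zero (hF₀ w hw)) (hus ht)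
    (hvs ht) (eq_of_has_deriv_right_eq (f' := fun _ => 1) (fun x hx => ?_) (fun x hx => ?_)
      (fun x hx => (hGu x hx).continuousWithinAt) (fun x hx => (hGv x hx).continuousWithinAt)
      (congrArg G h₀) t ht)
  · exact (hGu x (Ico_subset_Icc_self hx)).mono_of_mem_nhdsWithin (Icc_mem_nhdsGE_of_mem hx)
  · exact (hGv x (Ico_subset_Icc_self hx)).mono_of_mem_nhdsWithin (Icc_mem_nhdsGE_of_mem hx)

theorem ODE_solution_eventuallyEq_of_ne_zero {F u v : ℝ → ℝ} {t₀ b : ℝ}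
    (hb : t₀ < b) (hF : ∀ᶠ w in 𝓝 (u t₀), ContinuousAt F w) (hF₀ : F (u t₀) ≠ 0)
    (hu : ∀ t ∈ Icc t₀ b, HasDerivWithinAt u (F (u t)) (Icc t₀ b) t)
    (hv : ∀ t ∈ Icc t₀ b, HasDerivWithinAt v (F (v t)) (Icc t₀ b) t)
    (h₀ : u t₀ = v t₀) : u =ᶠ[𝓝[≥] t₀] v := by
  obtain ⟨ε, hε, hball⟩ := Metric.eventually_nhds_iff_ball.1
    (hF.and (hF.self_of_nhds.eventually_ne hF₀))
  have hB : Metric.ball (u t₀) ε ∈ 𝓝 (u t₀) := Metric.ball_mem_nhds _ hε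
  have hnear : ∀ᶠ t in 𝓝[≥] t₀, u t ∈ Metric.ball (u t₀) ε ∧ v t ∈ Metric.ball (u t₀) ε := by
    rw [← nhdsWithin_Icc_eq_nhdsGE hb]
    exact ((hu t₀ (left_mem_Icc.2 hb.le)).continuousWithinAt.eventually_mem hB).and
      ((hv t₀ (left_mem_Icc.2 hb.le)).continuousWithinAt.eventually_mem (h₀ ▸ hB))
  obtain ⟨b₁, -, hb₁, hsub⟩ :=
    exists_Icc_mem_subset_of_mem_nhdsGE (hnear.and (Icc_mem_nhdsGE hb))
  have hIcc : Icc t₀ b₁ ⊆ Icc t₀ b := fun t ht => (hsub ht).2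
  refine mem_of_superset hb₁ (ODE_solution_unique_of_ne_zero Metric.isOpen_ball
    (convex_ball _ _).ordConnected (fun w hw => (hball w hw).1.continuousWithinAt)
    (fun w hw => (hball w hw).2) (fun t ht => (hsub ht).1.1) (fun t ht => (hsub ht).1.2)
    (fun t ht => (hu t (hIcc ht)).mono hIcc) (fun t ht => (hv t (hIcc ht)).mono hIcc) h₀)

theorem levelSet_eventuallyEq_of_hasDerivWithinAt_comp {E : Type*} [NormedAddCommGroup E]
    [NormedSpace ℝ E] [CompleteSpace E] {g π f : E → ℝ} {Φ' : E ≃L[ℝ] ℝ × ℝ} {p : E}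
    {z w : ℝ → E} {t₀ b : ℝ} (hb : t₀ < b)
    (hΦ : HasStrictFDerivAt (fun x => (g x, π x)) (Φ' : E →L[ℝ] ℝ × ℝ) p)
    (hf : Continuous f) (hfp : f p ≠ 0)
    (hz : ContinuousOn z (Icc t₀ b)) (hw : ContinuousOn w (Icc t₀ b))
    (hz₀ : z t₀ = p) (hw₀ : w t₀ = p)
    (hgz : ∀ t ∈ Icc t₀ b, g (z t) = g p) (hgw : ∀ t ∈ Icc t₀ b, g (w t) = g p)
    (hπz : ∀ t ∈ Icc t₀ b, HasDerivWithinAt (π ∘ z) (f (z t)) (Icc t₀ b) t)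
    (hπw : ∀ t ∈ Icc t₀ b, HasDerivWithinAt (π ∘ w) (f (w t)) (Icc t₀ b) t) :
    z =ᶠ[𝓝[≥] t₀] w := by
  set e := hΦ.toOpenPartialHomeomorph (fun x => (g x, π x))
  set ψ : ℝ → E := fun u => e.symm (g p, u)
  have hψ : ∀ x ∈ e.source, g x = g p → ψ (π x) = x := fun x hx hgx => by
    show e.symm (g p, π x) = x
    rw [← hgx]
    exact e.left_inv hx
  have hp : p ∈ e.source := hΦ.mem_toOpenPartialHomeomorph_source
  have hnear : ∀ᶠ t in 𝓝[≥] t₀, z t ∈ e.source ∧ w t ∈ e.source := by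
    rw [← nhdsWithin_Icc_eq_nhdsGE hb]
    have hsrc : e.source ∈ 𝓝 p := e.open_source.mem_nhds hp
    exact (hz.continuousWithinAt (left_mem_Icc.2 hb.le) |>.eventually_mem (hz₀ ▸ hsrc)).and
      (hw.continuousWithinAt (left_mem_Icc.2 hb.le) |>.eventually_mem (hw₀ ▸ hsrc))
  obtain ⟨b₁, hb₁, hsub⟩ :=
    mem_nhdsGE_iff_exists_Icc_subset.1 (hnear.and (Icc_mem_nhdsGE hb))
  have hIcc : Icc t₀ b₁ ⊆ Icc t₀ b := fun t ht => (hsub ht).2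
  have hF : ∀ᶠ u in 𝓝 (π (z t₀)), ContinuousAt (f ∘ ψ) u := by
    have htarget : ∀ᶠ u in 𝓝 (π p), (g p, u) ∈ e.target :=
      (continuous_const.prodMk continuous_id).continuousAt.eventually_mem
        (e.open_target.mem_nhds (e.map_source hp))
    rw [hz₀]
    exact htarget.mono fun u hu => hf.continuousAt.comp
      ((e.continuousAt_symm hu).comp (continuous_const.prodMk continuous_id).continuousAt)
  have hODE : ∀ y : ℝ → E, (∀ t ∈ Icc t₀ b₁, y t ∈ e.source) → (∀ t ∈ Icc t₀ b, g (y t) = g p) →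
      (∀ t ∈ Icc t₀ b, HasDerivWithinAt (π ∘ y) (f (y t)) (Icc t₀ b) t) →
      ∀ t ∈ Icc t₀ b₁, HasDerivWithinAt (π ∘ y) ((f ∘ ψ) ((π ∘ y) t)) (Icc t₀ b₁) t := by
    intro y hys hgy hy t ht
    rw [comp_apply, comp_apply, hψ _ (hys t ht) (hgy t (hIcc ht))]
    exact (hy t (hIcc ht)).mono hIcc
  have hπ := ODE_solution_eventuallyEq_of_ne_zero hb₁ hF
    (by simpa only [comp_apply, hz₀, hψ p hp rfl] using hfp)
    (hODE z (fun t ht => (hsub ht).1.1) hgz hπz) (hODE w (fun t ht => (hsub ht).1.2) hgw hπw)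
    (by simp only [comp_apply, hz₀, hw₀])
  filter_upwards [hπ, Icc_mem_nhdsGE hb₁] with t ht htI
  rw [← hψ _ (hsub htI).1.1 (hgz t (hIcc htI)), ← hψ _ (hsub htI).1.2 (hgw t (hIcc htI))]
  exact congrArg ψ ht

theorem constant_of_hasDerivWithinAt_of_fderiv_apply_eq_zero {E : Type*} [NormedAddCommGroup E]
    [NormedSpace ℝ E] {g : E → ℝ} {X : E → E} {y : ℝ → E} {a b : ℝ} (hg : Differentiable ℝ g)
    (hX : ∀ x, fderiv ℝ g x (X x) = 0)
    (hy : ∀ t ∈ Icc a b, HasDerivWithinAt y (X (y t)) (Icc a b) t) :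
    ∀ t ∈ Icc a b, g (y t) = g (y a) := by
  refine constant_of_has_deriv_right_zero
    (fun t ht => (hg _).continuousAt.comp_continuousWithinAt (hy t ht).continuousWithinAt)
    fun t ht => ?_
  have := (hg (y t)).hasFDerivAt.comp_hasDerivWithinAt t (hy t (Ico_subset_Icc_self ht))
  rw [hX] at this
  exact this.mono_of_mem_nhdsWithin (Icc_mem_nhdsGE_of_mem ht)

noncomputable def hamiltonianField (g : ℝ × ℝ → ℝ) (x : ℝ × ℝ) : ℝ × ℝ := (-pd2 g x, pd1 g x)

theorem fderiv_apply_eq_pd (g : ℝ × ℝ → ℝ) (x v : ℝ × ℝ) :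
    fderiv ℝ g x v = v.1 * pd1 g x + v.2 * pd2 g x := by
  rw [← (fderiv ℝ g x).comp_inl_add_comp_inr v, pd1, pd2]
  simp only [ContinuousLinearMap.comp_apply, ContinuousLinearMap.inl_apply,
    ContinuousLinearMap.inr_apply]
  rw [← smul_eq_mul, ← map_smul, ← smul_eq_mul v.2, ← map_smul]
  simp

theorem fderiv_apply_hamiltonianField (g : ℝ × ℝ → ℝ) (x : ℝ × ℝ) :
    fderiv ℝ g x (hamiltonianField g x) = 0 := by
  rw [fderiv_apply_eq_pd, hamiltonianField]
  ring

theorem continuous_hamiltonianField {g : ℝ × ℝ → ℝ} (hg : ContDiff ℝ 1 g) :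
    Continuous (hamiltonianField g) :=
  have hdg := hg.continuous_fderiv one_ne_zero
  ((hdg.clm_apply continuous_const).neg).prodMk (hdg.clm_apply continuous_const)

theorem pd1_sq_add_pd2_sq_ne_zero {g : ℝ × ℝ → ℝ} {x : ℝ × ℝ} (h : fderiv ℝ g x ≠ 0) :
    pd1 g x ^ 2 + pd2 g x ^ 2 ≠ 0 := by
  contrapose! h
  have h₁ : pd1 g x = 0 := by nlinarith [sq_nonneg (pd1 g x), sq_nonneg (pd2 g x)]
  have h₂ : pd2 g x = 0 := by nlinarith [sq_nonneg (pd1 g x), sq_nonneg (pd2 g x)]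
  refine ContinuousLinearMap.ext fun v => ?_
  simp [fderiv_apply_eq_pd, h₁, h₂]

theorem hamiltonianField_solution_eventuallyEq {g : ℝ × ℝ → ℝ} (hg : ContDiff ℝ 1 g)
    {p : ℝ × ℝ} (hp : fderiv ℝ g p ≠ 0) {z w : ℝ → ℝ × ℝ} {t₀ b : ℝ} (hb : t₀ < b)
    (hz : ∀ t ∈ Icc t₀ b, HasDerivWithinAt z (hamiltonianField g (z t)) (Icc t₀ b) t)
    (hw : ∀ t ∈ Icc t₀ b, HasDerivWithinAt w (hamiltonianField g (w t)) (Icc t₀ b) t)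
    (hz₀ : z t₀ = p) (hw₀ : w t₀ = p) : z =ᶠ[𝓝[≥] t₀] w := by
  set π : ℝ × ℝ →L[ℝ] ℝ :=
    (-pd2 g p) • ContinuousLinearMap.fst ℝ ℝ ℝ + pd1 g p • ContinuousLinearMap.snd ℝ ℝ ℝ
  have hπ : ∀ x, π x = -pd2 g p * x.1 + pd1 g p * x.2 := fun x => rfl
  have hv := pd1_sq_add_pd2_sq_ne_zero hp
  have hinj : Injective ((fderiv ℝ g p).prod π) := by
    rw [injective_iff_map_eq_zero]
    intro x hx
    have h₁ : x.1 * pd1 g p + x.2 * pd2 g p = 0 := by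
      rw [← fderiv_apply_eq_pd]; exact congrArg Prod.fst hx
    have h₂ : -pd2 g p * x.1 + pd1 g p * x.2 = 0 := by
      rw [← hπ]; exact congrArg Prod.snd hx
    have hx₁ : (pd1 g p ^ 2 + pd2 g p ^ 2) * x.1 = 0 := by
      linear_combination pd1 g p * h₁ - pd2 g p * h₂
    have hx₂ : (pd1 g p ^ 2 + pd2 g p ^ 2) * x.2 = 0 := by
      linear_combination pd2 g p * h₁ + pd1 g p * h₂
    exact Prod.ext ((mul_eq_zero.1 hx₁).resolve_left hv) ((mul_eq_zero.1 hx₂).resolve_left hv)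
  let Φ' : (ℝ × ℝ) ≃L[ℝ] ℝ × ℝ := (LinearEquiv.ofInjectiveEndo _ hinj).toContinuousLinearEquiv
  have hΦ : HasStrictFDerivAt (fun x => (g x, π x)) (Φ' : ℝ × ℝ →L[ℝ] ℝ × ℝ) p :=
    (hg.contDiffAt.hasStrictFDerivAt one_ne_zero).prodMk π.hasStrictFDerivAt
  have hfp : (π ∘ hamiltonianField g) p ≠ 0 := by
    rw [comp_apply, hπ]
    simp only [hamiltonianField]
    convert hv using 1
    ring
  have hconst : ∀ y : ℝ → ℝ × ℝ, y t₀ = p →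
      (∀ t ∈ Icc t₀ b, HasDerivWithinAt y (hamiltonianField g (y t)) (Icc t₀ b) t) →
      ∀ t ∈ Icc t₀ b, g (y t) = g p := fun y hy₀ hy t ht => by
    rw [← hy₀]
    exact constant_of_hasDerivWithinAt_of_fderiv_apply_eq_zero (hg.differentiable one_ne_zero)
      (fderiv_apply_hamiltonianField g) hy t ht
  exact levelSet_eventuallyEq_of_hasDerivWithinAt_comp hb hΦ
    (π.continuous.comp (continuous_hamiltonianField hg)) hfp
    (fun t ht => (hz t ht).continuousWithinAt) (fun t ht => (hw t ht).continuousWithinAt)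
    hz₀ hw₀ (hconst z hz₀ hz) (hconst w hw₀ hw)
    (fun t ht => π.hasFDerivAt.comp_hasDerivWithinAt t (hz t ht))
    (fun t ht => π.hasFDerivAt.comp_hasDerivWithinAt t (hw t ht))

/-- Uniqueness of solutions of the Hamiltonian system: if `g` is `C¹`,
`∇g(x) ≠ 0` for every `x` with `g x = g x₀`, and `z`, `ẑ` both solve the Hamiltonian
system on `[0, a]` with the same initial condition `x₀`, then they coincide on `[0, a]`. -/
theorem hamiltonian_system_uniqueness
    (g : ℝ × ℝ → ℝ) (hg : ContDiff ℝ 1 g)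
    (x₀ : ℝ × ℝ)
    (hgrad : ∀ x : ℝ × ℝ, g x = g x₀ → fderiv ℝ g x ≠ 0)
    (a : ℝ) (z zh : ℝ → ℝ × ℝ)
    (hz1 : ∀ t ∈ Set.Icc (0 : ℝ) a,
      HasDerivWithinAt (fun s => (z s).1) (-pd2 g (z t)) (Set.Icc 0 a) t)
    (hz2 : ∀ t ∈ Set.Icc (0 : ℝ) a,
      HasDerivWithinAt (fun s => (z s).2) (pd1 g (z t)) (Set.Icc 0 a) t)
    (hzh1 : ∀ t ∈ Set.Icc (0 : ℝ) a,
      HasDerivWithinAt (fun s => (zh s).1) (-pd2 g (zh t)) (Set.Icc 0 a) t)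
    (hzh2 : ∀ t ∈ Set.Icc (0 : ℝ) a,
      HasDerivWithinAt (fun s => (zh s).2) (pd1 g (zh t)) (Set.Icc 0 a) t)
    (hz0 : z 0 = x₀) (hzh0 : zh 0 = x₀) :
    ∀ t ∈ Set.Icc (0 : ℝ) a, z t = zh t := by
  have hz : ∀ t ∈ Icc 0 a, HasDerivWithinAt z (hamiltonianField g (z t)) (Icc 0 a) t :=
    fun t ht => (hz1 t ht).prodMk (hz2 t ht)
  have hzh : ∀ t ∈ Icc 0 a, HasDerivWithinAt zh (hamiltonianField g (zh t)) (Icc 0 a) t :=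
    fun t ht => (hzh1 t ht).prodMk (hzh2 t ht)
  have hclosed : IsClosed {t ∈ Icc 0 a | z t = zh t} :=
    isClosed_Icc.isClosed_eq (fun t ht => (hz t ht).continuousWithinAt)
      (fun t ht => (hzh t ht).continuousWithinAt)
  refine fun t ht => IsClosed.Icc_subset_of_forall_mem_nhdsWithin (s := {t | z t = zh t})
    (by rw [inter_comm]; exact hclosed) (hz0.trans hzh0.symm) ?_ ht
  rintro x ⟨hx, hxa⟩
  have hsub : Icc x a ⊆ Icc 0 a := Icc_subset_Icc_left hxa.1
  have hgx : g (z x) = g x₀ := hz0 ▸ constant_of_hasDerivWithinAt_of_fderiv_apply_eq_zero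
    (hg.differentiable one_ne_zero) (fderiv_apply_hamiltonianField g) hz x
    (Ico_subset_Icc_self hxa)
  exact nhdsWithin_mono _ Ioi_subset_Ici_self <|
    hamiltonianField_solution_eventuallyEq hg (hgrad _ hgx) hxa.2
      (fun t ht => (hz t (hsub ht)).mono hsub) (fun t ht => (hzh t (hsub ht)).mono hsub) rfl
      hx.symm
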